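/- arXiv:2603.09153 — 2 statements merged into one kernel-verified Lean document; each statement's English description precedes it below -/
import Mathlib

section
/- Let G be a digraph and p ≥ 0. Every ∂-invariant cluster in Ω_p(G) is a finite sum of minimal ∂-invariant clusters. -/
open scoped BigOperators
open Classical

/-- A digraph: an irreflexive relation on a vertex type. -/
structure Dgraph (V : Type*) where
  Adj : V → V → Prop
  loopless : ∀ v : V, ¬ Adj v v

/-- An elementary `p`-path on the vertex type `V`: a sequence of `p+1` vertices. -/
abbrev EPath (V : Type*) (p : ℕ) := Fin (p + 1) → V

/-- A path is regular if consecutive vertices are distinct. -/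
def IsRegularPath {V : Type*} {p : ℕ} (f : EPath V p) : Prop :=
  ∀ k : Fin p, f k.castSucc ≠ f k.succ

/-- A path is allowed if consecutive vertices are joined by an arrow. -/
def IsAllowedPath {V : Type*} (G : Dgraph V) {p : ℕ} (f : EPath V p) : Prop :=
  ∀ k : Fin p, G.Adj (f k.castSucc) (f k.succ)

/-- The projection of `Λ_p` onto its regular part; this realizes `R_p = Λ_p / I_p`
as the subspace of `Λ_p` spanned by the regular elementary paths. -/
noncomputable def regProj (K : Type*) [Field K] (V : Type*) (p : ℕ) :
    (EPath V p →₀ K) →ₗ[K] (EPath V p →₀ K) :=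
  Finsupp.linearCombination K
    (fun f : EPath V p => if IsRegularPath f then Finsupp.single f (1 : K) else 0)

/-- The (non-reduced) boundary operator on `Λ`. -/
noncomputable def bdryFull (K : Type*) [Field K] (V : Type*) (p : ℕ) :
    (EPath V (p + 1) →₀ K) →ₗ[K] (EPath V p →₀ K) :=
  Finsupp.linearCombination K
    (fun f : EPath V (p + 1) =>
      ∑ q : Fin (p + 2), ((-1 : K) ^ (q : ℕ)) • Finsupp.single (f ∘ q.succAbove) (1 : K))

/-- The boundary operator `∂` on the regular part (i.e. on `R`). -/
noncomputable def bdry (K : Type*) [Field K] (V : Type*) (p : ℕ) :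
    (EPath V (p + 1) →₀ K) →ₗ[K] (EPath V p →₀ K) :=
  (regProj K V p).comp (bdryFull K V p)

/-- The span of the regular elementary paths: the realization of `R_p` inside `Λ_p`. -/
noncomputable def regularMod (K : Type*) [Field K] (V : Type*) (p : ℕ) :
    Submodule K (EPath V p →₀ K) :=
  Submodule.span K {x | ∃ f : EPath V p, IsRegularPath f ∧ x = Finsupp.single f (1 : K)}

/-- `A_p(G)`: the span of the allowed elementary paths. -/
noncomputable def allowedMod (K : Type*) [Field K] (V : Type*) (G : Dgraph V) (p : ℕ) :
    Submodule K (EPath V p →₀ K) :=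
  Submodule.span K {x | ∃ f : EPath V p, IsAllowedPath G f ∧ x = Finsupp.single f (1 : K)}

/-- `Ω_p(G)`: the space of ∂-invariant `p`-paths. -/
noncomputable def Omega (K : Type*) [Field K] (V : Type*) (G : Dgraph V) :
    (p : ℕ) → Submodule K (EPath V p →₀ K)
  | 0 => allowedMod K V G 0
  | (p + 1) => allowedMod K V G (p + 1) ⊓ (allowedMod K V G p).comap (bdry K V p)

/-- An `(a,b)`-cluster: every elementary path occurring with nonzero coefficient
starts at `a` and ends at `b`. -/
def IsCluster {K : Type*} [Field K] {V : Type*} {p : ℕ} (a b : V) (ω : EPath V p →₀ K) : Prop :=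
  ∀ f ∈ ω.support, f 0 = a ∧ f (Fin.last p) = b

/-- A minimal ∂-invariant path: a nonzero element of `Ω_p` such that no nonzero
∂-invariant path is supported on a proper (nonempty) subset of its support. -/
def IsMinimal (K : Type*) [Field K] {V : Type*} (G : Dgraph V) (p : ℕ)
    (ω : EPath V p →₀ K) : Prop :=
  ω ∈ Omega K V G p ∧ ω ≠ 0 ∧
    ∀ ω' : EPath V p →₀ K, ω' ∈ Omega K V G p → ω' ≠ 0 → ¬ (ω'.support ⊂ ω.support)

/-- A digraph map: every arrow goes to an arrow or collapses to a vertex. -/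
structure DgraphMap {V W : Type*} (X : Dgraph V) (Y : Dgraph W) where
  toFun : V → W
  map_adj : ∀ ⦃u v : V⦄, X.Adj u v → Y.Adj (toFun u) (toFun v) ∨ toFun u = toFun v

/-- The induced map `f_* : R_n(X) → R_n(Y)` (in the regular-part realization):
push forward elementary paths and kill the irregular ones. -/
noncomputable def inducedMap (K : Type*) [Field K] {V W : Type*} (φ : V → W) (p : ℕ) :
    (EPath V p →₀ K) →ₗ[K] (EPath W p →₀ K) :=
  (regProj K W p).comp (Finsupp.lmapDomain K K (fun f : EPath V p => φ ∘ f))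

/-- Cyclic successor on `Fin m`. -/
def finRot {m : ℕ} (k : Fin m) : Fin m := ⟨((k : ℕ) + 1) % m, Nat.mod_lt _ k.pos⟩

/-- The vertices of the trapezohedron `T_m`. -/
inductive TVert (m : ℕ) : Type
  | a : TVert m
  | b : TVert m
  | vi : Fin m → TVert m
  | vj : Fin m → TVert m

/-- The adjacency relation of the trapezohedron `T_m`:
`a → i_k`, `i_k → j_k`, `i_{k+1} → j_k`, `j_k → b` (indices mod `m`). -/
def TrapAdj (m : ℕ) : TVert m → TVert m → Prop
  | TVert.a, TVert.vi _ => True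
  | TVert.vi k, TVert.vj l => k = l ∨ k = finRot l
  | TVert.vj _, TVert.b => True
  | _, _ => False

/-- The trapezohedron digraph `T_m`. -/
def Trap (m : ℕ) : Dgraph (TVert m) where
  Adj := TrapAdj m
  loopless := by intro v h; cases v <;> exact h

/-- The trapezohedral path `τ_m`. -/
noncomputable def tau (K : Type*) [Field K] (m : ℕ) : EPath (TVert m) 3 →₀ K :=
  ∑ k : Fin m,
    (Finsupp.single ![TVert.a, TVert.vi k, TVert.vj k, TVert.b] (1 : K)
      - Finsupp.single ![TVert.a, TVert.vi (finRot k), TVert.vj k, TVert.b] (1 : K))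

/-- The submodule of `(a,b)`-clusters. -/
def clusterMod (K : Type*) [Field K] (V : Type*) (p : ℕ) (a b : V) :
    Submodule K (EPath V p →₀ K) where
  carrier := {ω | ∀ f ∈ ω.support, f 0 = a ∧ f (Fin.last p) = b}
  add_mem' := by
    intro x y hx hy f hf
    rcases Finset.mem_union.mp (Finsupp.support_add hf) with h | h
    exacts [hx f h, hy f h]
  zero_mem' := by intro f hf; simp at hf
  smul_mem' := by
    intro c x hx f hf
    exact hx f (Finsupp.support_smul hf)

/-- `Ω₃^{(a,b)}(G)`: the ∂-invariant `(a,b)`-clusters. -/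
noncomputable def OmegaAB (K : Type*) [Field K] (V : Type*) (G : Dgraph V) (a b : V) :
    Submodule K (EPath V 3 →₀ K) :=
  Omega K V G 3 ⊓ clusterMod K V 3 a b

/-- Out-neighbourhood. -/
def Nplus {V : Type*} (G : Dgraph V) (v : V) : Set V := {w | G.Adj v w}

/-- In-neighbourhood. -/
def Nminus {V : Type*} (G : Dgraph V) (v : V) : Set V := {w | G.Adj w v}

/-- `E(X,Y)`: the edges of `G` starting in `X` and ending in `Y`. -/
def Ebetween {V : Type*} (G : Dgraph V) (X Y : Set V) : Set (V × V) :=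
  {p | p.1 ∈ X ∧ p.2 ∈ Y ∧ G.Adj p.1 p.2}

/-- `A = N⁺(a) \ {b}`. -/
def setA {V : Type*} (G : Dgraph V) (a b : V) : Set V := Nplus G a \ {b}

/-- `B = N⁻(b) \ {a}`. -/
def setB {V : Type*} (G : Dgraph V) (a b : V) : Set V := Nminus G b \ {a}

/-- The vertex set of `H = Ind(A \ B, B \ A)`. -/
def Hverts {V : Type*} (G : Dgraph V) (a b : V) : Set V :=
  (setA G a b \ setB G a b) ∪ (setB G a b \ setA G a b)

/-- `H = Ind(A \ B, B \ A)` regarded as an undirected (simple) graph on its vertex set. -/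
def Hgraph {V : Type*} (G : Dgraph V) (a b : V) : SimpleGraph (Hverts G a b) where
  Adj u v :=
    ((u : V) ∈ setA G a b \ setB G a b ∧ (v : V) ∈ setB G a b \ setA G a b ∧ G.Adj u v)
      ∨ ((v : V) ∈ setA G a b \ setB G a b ∧ (u : V) ∈ setB G a b \ setA G a b ∧ G.Adj v u)
  symm := by constructor; intro u v h; exact h.symm
  loopless := by
    constructor
    intro u h
    rcases h with ⟨_, _, h3⟩ | ⟨_, _, h3⟩ <;> exact G.loopless _ h3

/-- The set of vertices of `G` belonging to the connected component `c` of `H`. -/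
def compVerts {V : Type*} (G : Dgraph V) (a b : V)
    (c : (Hgraph G a b).ConnectedComponent) : Set V :=
  {v | ∃ h : v ∈ Hverts G a b, (Hgraph G a b).connectedComponentMk ⟨v, h⟩ = c}

/-- The set `S_k` associated to a connected component of `H`. -/
def Sset {V : Type*} (G : Dgraph V) (a b : V)
    (c : (Hgraph G a b).ConnectedComponent) : Set (V × V) :=
  Ebetween G (compVerts G a b c ∩ (setA G a b \ setB G a b))
      ((Nplus G a ∪ {a}) ∩ Nminus G b)
    ∪ Ebetween G (Nplus G a ∩ (Nminus G b ∪ {b}))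
      (compVerts G a b c ∩ (setB G a b \ setA G a b))

/-! Any element of a subspace `W ⊆ α →₀ K` is a sum of elements of `W` that are minimal for
their support: if `x ∈ W` is not minimal, some nonzero `y ∈ W` has `supp y ⊂ supp x`, and for
`f ∈ supp y` the decomposition `x = (x - (x f / y f) • y) + (x f / y f) • y` has both summands
in `W` with strictly smaller support. Clusters are closed under shrinking the support. -/

section SupportMinimal

variable {α K : Type*} [Field K]

/-- `IsMinimal K G p` is definitionally `(Omega K V G p).IsSupportMinimal`. -/
def Submodule.IsSupportMinimal (W : Submodule K (α →₀ K)) (x : α →₀ K) : Prop :=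
  x ∈ W ∧ x ≠ 0 ∧ ∀ y ∈ W, y ≠ 0 → ¬ y.support ⊂ x.support

theorem Finsupp.support_sub_smul_subset_erase {x y : α →₀ K} (hyx : y.support ⊆ x.support)
    {f : α} (hf : y f ≠ 0) : (x - (x f / y f) • y).support ⊆ x.support.erase f := by
  intro g hg
  refine Finset.mem_erase.mpr ⟨?_, ?_⟩
  · rintro rfl
    exact Finsupp.mem_support_iff.mp hg (by simp [hf])
  · rcases Finset.mem_union.mp (Finsupp.support_sub hg) with hx | hy
    exacts [hx, hyx (Finsupp.support_smul hy)]

theorem Submodule.exists_list_isSupportMinimal_sum (W : Submodule K (α →₀ K)) {x : α →₀ K}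
    (hx : x ∈ W) :
    ∃ L : List (α →₀ K), (∀ y ∈ L, W.IsSupportMinimal y ∧ y.support ⊆ x.support) ∧
      L.sum = x := by
  induction hn : x.support.card using Nat.strong_induction_on generalizing x with
  | _ n ih =>
  by_cases hx0 : x = 0
  · exact ⟨[], by simp, by simp [hx0]⟩
  by_cases hmin : W.IsSupportMinimal x
  · exact ⟨[x], by simp [hmin], by simp⟩
  obtain ⟨y, hyW, hy0, hyx⟩ : ∃ y ∈ W, y ≠ 0 ∧ y.support ⊂ x.support := by
    simpa [Submodule.IsSupportMinimal, hx, hx0] using hmin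
  obtain ⟨f, hf⟩ := Finsupp.support_nonempty_iff.mpr hy0
  set c := x f / y f
  have hrest : (x - c • y).support ⊆ x.support.erase f :=
    Finsupp.support_sub_smul_subset_erase hyx.subset (Finsupp.mem_support_iff.mp hf)
  have hpart : (c • y).support ⊆ y.support := Finsupp.support_smul
  obtain ⟨L₁, hL₁, hsum₁⟩ := ih _ (hn ▸ (Finset.card_le_card hrest).trans_lt
      (Finset.card_erase_lt_of_mem (hyx.subset hf))) (W.sub_mem hx (W.smul_mem c hyW)) rfl
  obtain ⟨L₂, hL₂, hsum₂⟩ := ih _ (hn ▸ (Finset.card_le_card hpart).trans_lt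
      (Finset.card_lt_card hyx)) (W.smul_mem c hyW) rfl
  refine ⟨L₁ ++ L₂, ?_, by rw [List.sum_append, hsum₁, hsum₂, sub_add_cancel]⟩
  rintro z hz
  rcases List.mem_append.mp hz with hz | hz
  · exact (hL₁ z hz).imp_right fun h => h.trans (hrest.trans (Finset.erase_subset _ _))
  · exact (hL₂ z hz).imp_right fun h => h.trans (hpart.trans hyx.subset)

end SupportMinimal

theorem IsCluster.mono {K : Type*} [Field K] {V : Type*} {p : ℕ} {a b : V}
    {ω ω' : EPath V p →₀ K} (hcl : IsCluster a b ω) (h : ω'.support ⊆ ω.support) :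
    IsCluster a b ω' := fun f hf => hcl f (h hf)

theorem statement2 (K : Type*) [Field K] {V : Type*} (G : Dgraph V) (p : ℕ) (a b : V)
    (ω : EPath V p →₀ K) (hω : ω ∈ Omega K V G p) (hcl : IsCluster a b ω) :
    ∃ (n : ℕ) (g : Fin n → (EPath V p →₀ K)),
      (∀ i : Fin n, IsMinimal K G p (g i) ∧ ∃ a' b' : V, IsCluster a' b' (g i)) ∧
      ω = ∑ i : Fin n, g i := by
  obtain ⟨L, hL, rfl⟩ := (Omega K V G p).exists_list_isSupportMinimal_sum hω
  refine ⟨L.length, L.get, fun i => ?_, by rw [← Fin.sum_ofFn, List.ofFn_get]⟩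
  obtain ⟨hmin, hsupp⟩ := hL _ (L.get_mem i)
  exact ⟨hmin, a, b, hcl.mono hsupp⟩
end

section
/- Let G be a digraph, m ≥ 2 an integer, and let a, i₀,…,i_{m−1}, j₀,…,j_{m−1}, b be vertices (not necessarily pairwise distinct) satisfying a → i_k, i_k → j_k, j_k → b, and i_{k+1} → j_k for all k = 0,…,m−1 with indices mod m. Then ω := Σ_{k=0}^{m−1} (e_{a i_k j_k b} − e_{a i_{k+1} j_k b}) belongs to Ω₃(G); moreover there exists a digraph map f : T_m → G with f_*(τ_m) = ω. -/
/-
Every elementary path in `ω` is allowed. In `∂ω` the two faces `e_{a j_k b}` of the `k`-th summand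
cancel each other, and the faces `e_{a i_k b}`, `e_{a i_{k+1} b}` cancel after the reindexing
`k ↦ k + 1` of the sum; what remains consists of allowed 2-paths, so `ω ∈ Ω₃`. The map
`T_m → G` sending each vertex to its namesake takes every elementary path of `τ_m` to an allowed,
hence regular, path, so `f_*` maps `τ_m` onto `ω` term by term.
-/

open scoped BigOperators
open Classical

section PathComplex

variable {K : Type*} [Field K] {V : Type*} {G : Dgraph V}

theorem IsAllowedPath.isRegularPath {p : ℕ} {f : EPath V p} (h : IsAllowedPath G f) :
    IsRegularPath f :=
  fun k hk => G.loopless _ (hk ▸ h k)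

@[simp]
theorem isAllowedPath_vecCons {p : ℕ} (x : V) (f : EPath V p) :
    IsAllowedPath G (Matrix.vecCons x f : EPath V (p + 1)) ↔
      G.Adj x (f 0) ∧ IsAllowedPath G f := by
  simp [IsAllowedPath, Fin.forall_fin_succ]

@[simp]
theorem isAllowedPath_vecSingleton (x : V) : IsAllowedPath G (![x] : EPath V 0) :=
  fun k => k.elim0

theorem single_mem_allowedMod {p : ℕ} {f : EPath V p} (h : IsAllowedPath G f) :
    Finsupp.single f (1 : K) ∈ allowedMod K V G p :=
  Submodule.subset_span ⟨f, h, rfl⟩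

theorem regProj_single_of_isRegularPath {p : ℕ} {f : EPath V p} (h : IsRegularPath f) :
    regProj K V p (Finsupp.single f 1) = Finsupp.single f 1 := by
  simp [regProj, Finsupp.linearCombination_single, h]

theorem inducedMap_single_of_isRegularPath {W : Type*} {φ : W → V} {p : ℕ} {f : EPath W p}
    (h : IsRegularPath (φ ∘ f)) :
    inducedMap K φ p (Finsupp.single f 1) = Finsupp.single (φ ∘ f) 1 := by
  rw [inducedMap, LinearMap.comp_apply, Finsupp.lmapDomain_apply, Finsupp.mapDomain_single,
    regProj_single_of_isRegularPath h]

theorem bdryFull_single_vec4 (x₀ x₁ x₂ x₃ : V) :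
    bdryFull K V 2 (Finsupp.single ![x₀, x₁, x₂, x₃] 1) =
      Finsupp.single ![x₁, x₂, x₃] 1 - Finsupp.single ![x₀, x₂, x₃] 1 +
        Finsupp.single ![x₀, x₁, x₃] 1 - Finsupp.single ![x₀, x₁, x₂] 1 := by
  have face : ∀ q : Fin 4, ![x₀, x₁, x₂, x₃] ∘ q.succAbove =
      ![![x₁, x₂, x₃], ![x₀, x₂, x₃], ![x₀, x₁, x₃], ![x₀, x₁, x₂]] q := by
    intro q; funext k; fin_cases q <;> fin_cases k <;> rfl
  have sign : ∀ q : Fin 4, (-1 : K) ^ (q : ℕ) = ![1, -1, 1, -1] q := by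
    intro q; fin_cases q <;> norm_num
  rw [bdryFull, Finsupp.linearCombination_single, one_smul, Fin.sum_univ_four]
  simp only [face, sign, Matrix.cons_val_zero, Matrix.cons_val_one, Matrix.cons_val, one_smul,
    neg_smul]
  abel

theorem bdry_single_vec4 {x₀ x₁ x₂ x₃ : V} (h : IsAllowedPath G ![x₀, x₁, x₂, x₃]) :
    bdry K V 2 (Finsupp.single ![x₀, x₁, x₂, x₃] 1) =
      Finsupp.single ![x₁, x₂, x₃] 1 - regProj K V 2 (Finsupp.single ![x₀, x₂, x₃] 1) +
        regProj K V 2 (Finsupp.single ![x₀, x₁, x₃] 1) - Finsupp.single ![x₀, x₁, x₂] 1 := by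
  have h₁₂₃ : IsAllowedPath G ![x₁, x₂, x₃] := by simp_all
  have h₀₁₂ : IsAllowedPath G ![x₀, x₁, x₂] := by simp_all
  rw [bdry, LinearMap.comp_apply, bdryFull_single_vec4, map_sub, map_add, map_sub,
    regProj_single_of_isRegularPath h₁₂₃.isRegularPath,
    regProj_single_of_isRegularPath h₀₁₂.isRegularPath]

end PathComplex

theorem finRot_eq_finRotate {m : ℕ} (k : Fin m) : finRot k = finRotate m k := by
  have := k.neZero
  ext
  simp [finRot, Fin.val_add]

theorem sum_sub_finRot_eq_zero {M : Type*} [AddCommGroup M] {m : ℕ} (g : Fin m → M) :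
    ∑ k, (g k - g (finRot k)) = 0 := by
  simp only [Finset.sum_sub_distrib, finRot_eq_finRotate, Equiv.sum_comp, sub_self]

section Trapezohedron

variable {K : Type*} [Field K] {V : Type*} {G : Dgraph V} {m : ℕ}

noncomputable def trapezohedralPath (K : Type*) [Field K] {V : Type*} {m : ℕ} (a b : V)
    (iv jv : Fin m → V) : EPath V 3 →₀ K :=
  ∑ k : Fin m, (Finsupp.single ![a, iv k, jv k, b] (1 : K)
    - Finsupp.single ![a, iv (finRot k), jv k, b] (1 : K))

structure IsTrapezohedron (G : Dgraph V) (a b : V) (iv jv : Fin m → V) : Prop where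
  adj_a_i : ∀ k, G.Adj a (iv k)
  adj_i_j : ∀ k, G.Adj (iv k) (jv k)
  adj_j_b : ∀ k, G.Adj (jv k) b
  adj_finRot_i_j : ∀ k, G.Adj (iv (finRot k)) (jv k)

namespace IsTrapezohedron

variable {a b : V} {iv jv : Fin m → V}

theorem isAllowedPath_i (h : IsTrapezohedron G a b iv jv) (k : Fin m) :
    IsAllowedPath G ![a, iv k, jv k, b] := by
  simp [h.adj_a_i k, h.adj_i_j k, h.adj_j_b k]

theorem isAllowedPath_finRot_i (h : IsTrapezohedron G a b iv jv) (k : Fin m) :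
    IsAllowedPath G ![a, iv (finRot k), jv k, b] := by
  simp [h.adj_a_i (finRot k), h.adj_finRot_i_j k, h.adj_j_b k]

theorem trapezohedralPath_mem_allowedMod (h : IsTrapezohedron G a b iv jv) :
    trapezohedralPath K a b iv jv ∈ allowedMod K V G 3 :=
  Submodule.sum_mem _ fun k _ =>
    sub_mem (single_mem_allowedMod (h.isAllowedPath_i k))
      (single_mem_allowedMod (h.isAllowedPath_finRot_i k))

theorem bdry_trapezohedralPath (h : IsTrapezohedron G a b iv jv) :
    bdry K V 2 (trapezohedralPath K a b iv jv) =
      ∑ k : Fin m, (Finsupp.single ![iv k, jv k, b] 1 - Finsupp.single ![iv (finRot k), jv k, b] 1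
        - Finsupp.single ![a, iv k, jv k] 1 + Finsupp.single ![a, iv (finRot k), jv k] 1) := by
  have summand : ∀ k, bdry K V 2 (Finsupp.single ![a, iv k, jv k, b] 1
      - Finsupp.single ![a, iv (finRot k), jv k, b] 1) =
      (Finsupp.single ![iv k, jv k, b] 1 - Finsupp.single ![iv (finRot k), jv k, b] 1
        - Finsupp.single ![a, iv k, jv k] 1 + Finsupp.single ![a, iv (finRot k), jv k] 1)
      + (regProj K V 2 (Finsupp.single ![a, iv k, b] 1)
        - regProj K V 2 (Finsupp.single ![a, iv (finRot k), b] 1)) := by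
    intro k
    rw [map_sub, bdry_single_vec4 (h.isAllowedPath_i k),
      bdry_single_vec4 (h.isAllowedPath_finRot_i k)]
    abel
  rw [trapezohedralPath, map_sum, Finset.sum_congr rfl fun k _ => summand k,
    Finset.sum_add_distrib,
    sum_sub_finRot_eq_zero (fun k => regProj K V 2 (Finsupp.single ![a, iv k, b] 1)), add_zero]

theorem bdry_trapezohedralPath_mem_allowedMod (h : IsTrapezohedron G a b iv jv) :
    bdry K V 2 (trapezohedralPath K a b iv jv) ∈ allowedMod K V G 2 := by
  rw [h.bdry_trapezohedralPath]
  refine Submodule.sum_mem _ fun k _ => add_mem (sub_mem (sub_mem ?_ ?_) ?_) ?_ <;>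
    refine single_mem_allowedMod ?_
  · simp [h.adj_i_j k, h.adj_j_b k]
  · simp [h.adj_finRot_i_j k, h.adj_j_b k]
  · simp [h.adj_a_i k, h.adj_i_j k]
  · simp [h.adj_a_i (finRot k), h.adj_finRot_i_j k]

theorem trapezohedralPath_mem_omega (h : IsTrapezohedron G a b iv jv) :
    trapezohedralPath K a b iv jv ∈ Omega K V G 3 :=
  ⟨h.trapezohedralPath_mem_allowedMod, h.bdry_trapezohedralPath_mem_allowedMod⟩

end IsTrapezohedron

theorem inducedMap_trapezohedralPath {W : Type*} (φ : W → V) {a b : W} {iv jv : Fin m → W}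
    (h : IsTrapezohedron G (φ a) (φ b) (φ ∘ iv) (φ ∘ jv)) :
    inducedMap K φ 3 (trapezohedralPath K a b iv jv)
      = trapezohedralPath K (φ a) (φ b) (φ ∘ iv) (φ ∘ jv) := by
  have comp_vec (x₀ x₁ x₂ x₃ : W) : φ ∘ ![x₀, x₁, x₂, x₃] = ![φ x₀, φ x₁, φ x₂, φ x₃] :=
    (FinVec.map_eq φ _).symm
  rw [trapezohedralPath, trapezohedralPath, map_sum]
  refine Finset.sum_congr rfl fun k _ => ?_
  rw [map_sub, inducedMap_single_of_isRegularPath, inducedMap_single_of_isRegularPath, comp_vec,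
    comp_vec]
  · rfl
  · rw [comp_vec]; exact (h.isAllowedPath_finRot_i k).isRegularPath
  · rw [comp_vec]; exact (h.isAllowedPath_i k).isRegularPath

def TVert.lift (a b : V) (iv jv : Fin m → V) : TVert m → V
  | TVert.a => a
  | TVert.b => b
  | TVert.vi k => iv k
  | TVert.vj k => jv k

def IsTrapezohedron.dgraphMap {a b : V} {iv jv : Fin m → V} (h : IsTrapezohedron G a b iv jv) :
    DgraphMap (Trap m) G where
  toFun := TVert.lift a b iv jv
  map_adj := by
    rintro (_ | _ | k | k) (_ | _ | l | l) hkl <;> try exact (hkl : False).elim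
    · exact .inl (h.adj_a_i l)
    · rcases (hkl : k = l ∨ k = finRot l) with rfl | rfl
      · exact .inl (h.adj_i_j k)
      · exact .inl (h.adj_finRot_i_j l)
    · exact .inl (h.adj_j_b k)

theorem IsTrapezohedron.inducedMap_tau {a b : V} {iv jv : Fin m → V}
    (h : IsTrapezohedron G a b iv jv) :
    inducedMap K h.dgraphMap.toFun 3 (tau K m) = trapezohedralPath K a b iv jv :=
  inducedMap_trapezohedralPath (TVert.lift a b iv jv) h

end Trapezohedron

theorem statement6_general (K : Type*) [Field K] {V : Type*} (G : Dgraph V) (m : ℕ)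
    (a b : V) (iv jv : Fin m → V)
    (hai : ∀ k : Fin m, G.Adj a (iv k))
    (hij : ∀ k : Fin m, G.Adj (iv k) (jv k))
    (hjb : ∀ k : Fin m, G.Adj (jv k) b)
    (hij' : ∀ k : Fin m, G.Adj (iv (finRot k)) (jv k)) :
    (∑ k : Fin m, (Finsupp.single ![a, iv k, jv k, b] (1 : K)
        - Finsupp.single ![a, iv (finRot k), jv k, b] (1 : K))) ∈ Omega K V G 3 ∧
    ∃ f : DgraphMap (Trap m) G,
      inducedMap K f.toFun 3 (tau K m)
        = ∑ k : Fin m, (Finsupp.single ![a, iv k, jv k, b] (1 : K)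
            - Finsupp.single ![a, iv (finRot k), jv k, b] (1 : K)) := by
  have h : IsTrapezohedron G a b iv jv := ⟨hai, hij, hjb, hij'⟩
  exact ⟨h.trapezohedralPath_mem_omega, h.dgraphMap, h.inducedMap_tau⟩

theorem statement6 (K : Type*) [Field K] {V : Type*} (G : Dgraph V) (m : ℕ) (hm : 2 ≤ m)
    (a b : V) (iv jv : Fin m → V)
    (hai : ∀ k : Fin m, G.Adj a (iv k))
    (hij : ∀ k : Fin m, G.Adj (iv k) (jv k))
    (hjb : ∀ k : Fin m, G.Adj (jv k) b)
    (hij' : ∀ k : Fin m, G.Adj (iv (finRot k)) (jv k)) :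
    (∑ k : Fin m, (Finsupp.single ![a, iv k, jv k, b] (1 : K)
        - Finsupp.single ![a, iv (finRot k), jv k, b] (1 : K))) ∈ Omega K V G 3 ∧
    ∃ f : DgraphMap (Trap m) G,
      inducedMap K f.toFun 3 (tau K m)
        = ∑ k : Fin m, (Finsupp.single ![a, iv k, jv k, b] (1 : K)
            - Finsupp.single ![a, iv (finRot k), jv k, b] (1 : K)) :=
  statement6_general K G m a b iv jv hai hij hjb hij'
end
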